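/- arXiv:1010.1433 — 3 statements merged into one kernel-verified Lean document; each statement's English description precedes it below -/
import Mathlib

section
/- Let δ ∈ (0,1), let V : ℝ^d → ℝ be smooth with −1+δ ≤ V ≤ −δ, let φ : ℝ^d → ℝ be smooth with |∇φ(x)| < 1 for all x, and let K₀ ⊆ ℝ^d be such that √(1 − |∇φ(x)|²) ≥ −V(x) for every x ∈ ℝ^d, with equality if and only if x ∈ K₀. Then for all (x,ξ) ∈ ℝ^d × ℝ^d one has Im a₊(x,ξ) ≤ 0, and Im a₊(x,ξ) = 0 if and only if x ∈ K₀ and ξ = 0. -/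
/-- The gradient `∇φ(x)` of a function on `ℝ^d`, as the vector of partial derivatives. -/
noncomputable def gradPhi (d : ℕ) (φ : (Fin d → ℝ) → ℝ) (x : Fin d → ℝ) : Fin d → ℝ :=
  fun j => fderiv ℝ φ x (Pi.single j 1)

/-- The symbol `a₊(x,ξ) = -i √(1 + (ξ + i∇φ(x))²) - i V(x)` (principal square root). -/
noncomputable def aPlus (d : ℕ) (V φ : (Fin d → ℝ) → ℝ) (x ξ : Fin d → ℝ) : ℂ :=
  -Complex.I * ((1 + ∑ j : Fin d, ((ξ j : ℂ) + Complex.I * (gradPhi d φ x j : ℝ)) ^ 2)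
      ^ ((1 : ℂ) / 2))
    - Complex.I * (V x : ℝ)

/-- `Im a₊ ≤ 0` everywhere, with equality exactly on `K₀ × {0}`. -/
theorem stmt11 (d : ℕ) (hd : 1 ≤ d) (δ : ℝ) (hδ0 : 0 < δ) (hδ1 : δ < 1)
    (V φ : (Fin d → ℝ) → ℝ) (hV : ContDiff ℝ (⊤ : ℕ∞) V) (hφ : ContDiff ℝ (⊤ : ℕ∞) φ)
    (hVbd : ∀ x, -1 + δ ≤ V x ∧ V x ≤ -δ)
    (hφ1 : ∀ x, Real.sqrt (∑ j : Fin d, (gradPhi d φ x j) ^ 2) < 1)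
    (K₀ : Set (Fin d → ℝ))
    (hK : ∀ x, -V x ≤ Real.sqrt (1 - ∑ j : Fin d, (gradPhi d φ x j) ^ 2) ∧
      (Real.sqrt (1 - ∑ j : Fin d, (gradPhi d φ x j) ^ 2) = -V x ↔ x ∈ K₀)) :
    ∀ (x ξ : Fin d → ℝ),
      (aPlus d V φ x ξ).im ≤ 0 ∧
      ((aPlus d V φ x ξ).im = 0 ↔ x ∈ K₀ ∧ ξ = 0) := by
  intro x ξ
  set p : Fin d → ℝ := gradPhi d φ x with hp
  set S : ℝ := ∑ j, p j ^ 2 with hSdef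
  set T : ℝ := ∑ j, ξ j ^ 2 with hTdef
  have hS0 : 0 ≤ S := Finset.sum_nonneg fun j _ => sq_nonneg _
  have hS1 : S < 1 := by
    have h := hφ1 x
    nlinarith [Real.sq_sqrt hS0, Real.sqrt_nonneg S]
  have hT0 : 0 ≤ T := Finset.sum_nonneg fun j _ => sq_nonneg _
  set z : ℂ := 1 + ∑ j : Fin d, ((ξ j : ℂ) + Complex.I * (p j : ℝ)) ^ 2 with hzdef
  have hz : z = ((1 + T - S : ℝ) : ℂ) + ((2 * ∑ j, ξ j * p j : ℝ) : ℂ) * Complex.I := by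
    rw [hzdef]
    have : ∀ j : Fin d, ((ξ j : ℂ) + Complex.I * (p j : ℝ)) ^ 2
        = ((ξ j ^ 2 - p j ^ 2 : ℝ) : ℂ) + ((2 * (ξ j * p j) : ℝ) : ℂ) * Complex.I := by
      intro j
      have := Complex.I_sq
      push_cast
      ring_nf
      rw [Complex.I_sq]
      ring
    rw [Finset.sum_congr rfl (fun j _ => this j)]
    rw [Finset.sum_add_distrib, ← Finset.sum_mul]
    push_cast [hSdef, hTdef]
    rw [Finset.sum_sub_distrib]
    rw [Finset.mul_sum]
    ring
  have hzre : z.re = 1 + T - S := by rw [hz]; simp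
  have hzim : z.im = 2 * ∑ j, ξ j * p j := by rw [hz]; simp
  have hzre0 : 0 < z.re := by rw [hzre]; linarith
  have hz0 : z ≠ 0 := fun h => by rw [h] at hzre0; simp at hzre0
  set w : ℂ := z ^ ((1 : ℂ) / 2) with hwdef
  have hw2 : w * w = z := by
    rw [hwdef, ← Complex.cpow_add _ _ hz0]
    norm_num
  have hwre0 : 0 ≤ w.re := by
    rw [hwdef, Complex.cpow_def_of_ne_zero hz0, Complex.exp_re]
    apply mul_nonneg (Real.exp_nonneg _)
    apply Real.cos_nonneg_of_mem_Icc
    constructor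
    · simp [Complex.log_im]
      have := Complex.neg_pi_lt_arg z
      linarith
    · simp [Complex.log_im]
      have := Complex.arg_le_pi z
      linarith
  have hre : w.re ^ 2 = z.re + w.im ^ 2 := by
    have : z.re = w.re * w.re - w.im * w.im := by rw [← hw2]; simp [Complex.mul_re]
    nlinarith
  have hVx := hVbd x
  obtain ⟨hK1, hK2⟩ := hK x
  rw [← hp] at hK1 hK2
  have hr2 : Real.sqrt (1 - S) ^ 2 = 1 - S := Real.sq_sqrt (by linarith)
  have hVneg : 0 < -V x := by linarith [hVx.2]
  have hV2 : V x ^ 2 ≤ 1 - S := by nlinarith [Real.sqrt_nonneg (1 - S)]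
  have him : (aPlus d V φ x ξ).im = -w.re - V x := by
    simp only [aPlus, ← hp, ← hzdef, ← hwdef]
    simp [Complex.sub_im, Complex.mul_im]
  have hge : -V x ≤ w.re := by nlinarith
  constructor
  · rw [him]; linarith
  · constructor
    · intro h
      rw [him] at h
      have hwre : w.re = -V x := by linarith
      have e1 : V x ^ 2 = 1 + T - S + w.im ^ 2 := by
        rw [← hzre, ← hre, hwre]; ring
      have him2 := sq_nonneg w.im
      have hT : T = 0 := by linarith
      have hξ : ξ = 0 := by
        funext j
        have := (Finset.sum_eq_zero_iff_of_nonneg (fun j _ => sq_nonneg (ξ j))).mp hT j (Finset.mem_univ j)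
        simpa using pow_eq_zero_iff (n := 2) (by norm_num) |>.mp this
      refine ⟨hK2.mp ?_, hξ⟩
      have h1S : 1 - S = (-V x) ^ 2 := by nlinarith
      rw [h1S, Real.sqrt_sq hVneg.le]
    · rintro ⟨hx, hξ⟩
      have hr : Real.sqrt (1 - S) = -V x := hK2.mpr hx
      subst hξ
      have hT : T = 0 := by simp [hTdef]
      have hsum0 : (∑ j, (0 : Fin d → ℝ) j * p j) = 0 := by simp
      have hzr : z = ((1 - S : ℝ) : ℂ) := by rw [hz, hsum0, hT]; push_cast; ring
      have h1S : (0:ℝ) ≤ 1 - S := by linarith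
      have hwr : w = (((1 - S) ^ ((1:ℝ)/2) : ℝ) : ℂ) := by
        rw [hwdef, hzr, show ((1:ℂ)/2) = (((1:ℝ)/2 : ℝ) : ℂ) by norm_num,
          ← Complex.ofReal_cpow h1S]
      rw [him, hwr]
      have : (1 - S) ^ ((1:ℝ)/2) = Real.sqrt (1 - S) := (Real.sqrt_eq_rpow _).symm
      rw [Complex.ofReal_re, this, hr]
      ring
end

section
/- Let δ ∈ (0,1), let V : ℝ^d → ℝ be smooth with −1+δ ≤ V ≤ −δ, and let φ : ℝ^d → ℝ be smooth with |∇φ(x)| < 1 for all x. Assume h(x) := −√(1−|∇φ(x)|²) − V(x) ≤ 0 for every x ∈ ℝ^d. Let I ⊆ ℝ be an interval and γ : I → ℝ^d be differentiable with h(γ(t)) = 0 and γ'(t) = −∇φ(γ(t))/V(γ(t)) for all t ∈ I. Then for every t ∈ I: ∇_x a₊(γ(t),0) = 0 and ∇_ξ a₊(γ(t),0) = γ'(t) (a real vector); that is, t ↦ (γ(t),0) is an integral curve of the Hamiltonian vector field (∇_ξ a₊, −∇_x a₊) of a₊, and this vector field is real along the curve. -/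
/-- The `ℂ^d`-valued gradient of `a₊` in the momentum variables `ξ`. -/
noncomputable def gradXiAPlus (d : ℕ) (V φ : (Fin d → ℝ) → ℝ) (x ξ : Fin d → ℝ) :
    Fin d → ℂ :=
  fun j => fderiv ℝ (fun ξ' : Fin d → ℝ => aPlus d V φ x ξ') ξ (Pi.single j 1)

/-- The `ℂ^d`-valued gradient of `a₊` in the position variables `x`. -/
noncomputable def gradXAPlus (d : ℕ) (V φ : (Fin d → ℝ) → ℝ) (x ξ : Fin d → ℝ) :
    Fin d → ℂ :=
  fun j => fderiv ℝ (fun x' : Fin d → ℝ => aPlus d V φ x' ξ) x (Pi.single j 1)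


-- cast of positive real cpow 1/2 is sqrt
lemma cpow_half_ofReal {r : ℝ} (hr : 0 ≤ r) :
    ((r : ℂ)) ^ ((1 : ℂ) / 2) = ((Real.sqrt r : ℝ) : ℂ) := by
  rw [show ((1 : ℂ)/2) = ((1/2 : ℝ) : ℂ) by norm_num, ← Complex.ofReal_cpow hr,
    ← Real.sqrt_eq_rpow]

lemma sum_sq_eq (d : ℕ) (p : Fin d → ℝ) :
    (1 : ℂ) + ∑ j : Fin d, (((0:Fin d → ℝ) j : ℂ) + Complex.I * (p j : ℝ)) ^ 2
      = ((1 - ∑ j : Fin d, (p j) ^ 2 : ℝ) : ℂ) := by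
  push_cast
  simp only [Pi.zero_apply, Complex.ofReal_zero, zero_add, mul_pow, Complex.I_sq]
  simp only [neg_one_mul, Finset.sum_neg_distrib]
  ring

lemma aPlus_zero (d : ℕ) (V φ : (Fin d → ℝ) → ℝ) (x : Fin d → ℝ)
    (h : ∑ j : Fin d, (gradPhi d φ x j) ^ 2 ≤ 1) :
    aPlus d V φ x 0 = Complex.I *
      ((-(Real.sqrt (1 - ∑ j : Fin d, (gradPhi d φ x j) ^ 2)) - V x : ℝ) : ℂ) := by
  unfold aPlus
  rw [sum_sq_eq, cpow_half_ofReal (by linarith)]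
  push_cast
  ring

lemma gradPhi_contDiff (d : ℕ) (φ : (Fin d → ℝ) → ℝ) (hφ : ContDiff ℝ (⊤ : ℕ∞) φ) (j : Fin d) :
    ContDiff ℝ (⊤ : ℕ∞) (fun x => gradPhi d φ x j) :=
  (hφ.fderiv_right (by simp)).clm_apply contDiff_const

lemma gradX_zero (d : ℕ) (V φ : (Fin d → ℝ) → ℝ) (hV : ContDiff ℝ (⊤ : ℕ∞) V)
    (hφ : ContDiff ℝ (⊤ : ℕ∞) φ)
    (hlt : ∀ x, ∑ j : Fin d, (gradPhi d φ x j) ^ 2 < 1)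
    (hle : ∀ x, -(Real.sqrt (1 - ∑ j : Fin d, (gradPhi d φ x j) ^ 2)) - V x ≤ 0)
    (x0 : Fin d → ℝ)
    (h0 : -(Real.sqrt (1 - ∑ j : Fin d, (gradPhi d φ x0 j) ^ 2)) - V x0 = 0) :
    fderiv ℝ (fun x' => aPlus d V φ x' 0) x0 = 0 := by
  set g : (Fin d → ℝ) → ℝ :=
    fun x => -(Real.sqrt (1 - ∑ j : Fin d, (gradPhi d φ x j) ^ 2)) - V x with hg
  have hfun : (fun x' => aPlus d V φ x' 0) = fun x' => Complex.I * ((g x' : ℝ) : ℂ) :=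
    funext fun x' => aPlus_zero d V φ x' (le_of_lt (hlt x'))
  have hS : ContDiff ℝ (⊤ : ℕ∞) (fun x => ∑ j : Fin d, (gradPhi d φ x j) ^ 2) :=
    ContDiff.sum fun j _ => (gradPhi_contDiff d φ hφ j).pow 2
  have hdiffg : DifferentiableAt ℝ g x0 := by
    have hsq : DifferentiableAt ℝ (fun x =>
        Real.sqrt (1 - ∑ j : Fin d, (gradPhi d φ x j) ^ 2)) x0 := by
      have hne : (1 - ∑ j : Fin d, (gradPhi d φ x0 j) ^ 2) ≠ 0 := by
        have := hlt x0; linarith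
      exact (Real.hasDerivAt_sqrt hne).differentiableAt.comp x0
        ((differentiableAt_const (1:ℝ)).sub (hS.differentiable (by simp) x0))
    exact hsq.neg.sub (hV.differentiable (by simp) x0)
  have hmax : IsLocalMax g x0 :=
    Filter.Eventually.of_forall fun y => by show g y ≤ g x0; rw [hg]; simp only []; rw [show (-(Real.sqrt (1 - ∑ j : Fin d, (gradPhi d φ x0 j) ^ 2)) - V x0) = 0 from h0]; exact hle y
  have hg0 : HasFDerivAt g 0 x0 := hmax.fderiv_eq_zero ▸ hdiffg.hasFDerivAt
  have h1 : HasFDerivAt (fun x => ((g x : ℝ) : ℂ))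
      ((Complex.ofRealCLM : ℝ →L[ℝ] ℂ).comp 0) x0 :=
    Complex.ofRealCLM.hasFDerivAt.comp x0 hg0
  have h2 : HasFDerivAt (fun x => Complex.I * ((g x : ℝ) : ℂ))
      (Complex.I • ((Complex.ofRealCLM : ℝ →L[ℝ] ℂ).comp 0)) x0 :=
    h1.const_mul Complex.I
  rw [hfun, h2.fderiv]
  simp
  ext x
  simp

lemma gradXi_val (d : ℕ) (V φ : (Fin d → ℝ) → ℝ) (x0 : Fin d → ℝ)
    (hlt : ∑ j : Fin d, (gradPhi d φ x0 j) ^ 2 < 1) (j : Fin d) :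
    fderiv ℝ (fun ξ' => aPlus d V φ x0 ξ') 0 (Pi.single j 1) =
      ((gradPhi d φ x0 j : ℝ) : ℂ) /
        ((Real.sqrt (1 - ∑ k : Fin d, (gradPhi d φ x0 k) ^ 2) : ℝ) : ℂ) := by
  set p : Fin d → ℝ := gradPhi d φ x0 with hp
  have hS : (0:ℝ) ≤ ∑ k : Fin d, (p k) ^ 2 := by positivity
  have hr : (0:ℝ) < 1 - ∑ k : Fin d, (p k) ^ 2 := by linarith
  set L : Fin d → ((Fin d → ℝ) →L[ℝ] ℂ) :=
    fun k => (Complex.ofRealCLM : ℝ →L[ℝ] ℂ).comp (ContinuousLinearMap.proj k) with hL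
  have hc : ∀ k : Fin d, HasFDerivAt
      (fun ξ : Fin d → ℝ => ((ξ k : ℝ) : ℂ) + Complex.I * (p k : ℝ)) (L k) (0 : Fin d → ℝ) :=
    fun k => (L k).hasFDerivAt.add_const _
  have hsq : ∀ k : Fin d, HasFDerivAt
      (fun ξ : Fin d → ℝ => (((ξ k : ℝ) : ℂ) + Complex.I * (p k : ℝ)) ^ 2)
      ((Complex.I * (p k : ℝ)) • L k + (Complex.I * (p k : ℝ)) • L k) (0 : Fin d → ℝ) := by
    intro k
    have := (hc k).mul (hc k)
    simp only [Pi.zero_apply, Complex.ofReal_zero, zero_add, ← sq] at this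
    exact this
  have hw : HasFDerivAt
      (fun ξ : Fin d → ℝ => (1 : ℂ) + ∑ k : Fin d, (((ξ k : ℝ) : ℂ) + Complex.I * (p k : ℝ)) ^ 2)
      (∑ k : Fin d, ((Complex.I * (p k : ℝ)) • L k + (Complex.I * (p k : ℝ)) • L k)) (0 : Fin d → ℝ) :=
    (HasFDerivAt.fun_sum (fun k _ => hsq k)).const_add 1
  have hw0 : (1 : ℂ) + ∑ k : Fin d, ((((0 : Fin d → ℝ) k : ℝ) : ℂ) + Complex.I * (p k : ℝ)) ^ 2
      = ((1 - ∑ k : Fin d, (p k) ^ 2 : ℝ) : ℂ) := sum_sq_eq d p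
  have hslit : ((1 - ∑ k : Fin d, (p k) ^ 2 : ℝ) : ℂ) ∈ Complex.slitPlane := by
    rw [Complex.mem_slitPlane_iff]
    left
    rw [Complex.ofReal_re]
    exact hr
  have hcd : HasDerivAt (fun z : ℂ => z ^ ((1 : ℂ) / 2))
      (((1 : ℂ) / 2) * ((1 - ∑ k : Fin d, (p k) ^ 2 : ℝ) : ℂ) ^ ((1 : ℂ) / 2 - 1))
      ((1 - ∑ k : Fin d, (p k) ^ 2 : ℝ) : ℂ) :=
    (Complex.hasStrictDerivAt_cpow_const hslit).hasDerivAt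
  have hcomp := hcd.comp_hasFDerivAt_of_eq (0 : Fin d → ℝ) hw hw0.symm
  have hD : HasFDerivAt (fun ξ' => aPlus d V φ x0 ξ')
      ((-Complex.I) • ((((1 : ℂ) / 2) * ((1 - ∑ k : Fin d, (p k) ^ 2 : ℝ) : ℂ)
          ^ ((1 : ℂ) / 2 - 1)) •
        (∑ k : Fin d, ((Complex.I * (p k : ℝ)) • L k + (Complex.I * (p k : ℝ)) • L k))))
      (0 : Fin d → ℝ) := by
    have := (hcomp.const_mul (-Complex.I)).sub_const (Complex.I * (V x0 : ℝ))
    exact this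
  rw [hD.fderiv]
  have hpow : ((1 - ∑ k : Fin d, (p k) ^ 2 : ℝ) : ℂ) ^ ((1 : ℂ) / 2 - 1)
      = (((Real.sqrt (1 - ∑ k : Fin d, (p k) ^ 2) : ℝ) : ℂ))⁻¹ := by
    rw [show ((1 : ℂ) / 2 - 1) = ((-(1/2) : ℝ) : ℂ) by norm_num,
      ← Complex.ofReal_cpow hr.le, Real.rpow_neg hr.le, ← Real.sqrt_eq_rpow]
    push_cast
    ring
  have hs0 : (((Real.sqrt (1 - ∑ k : Fin d, (p k) ^ 2) : ℝ) : ℂ)) ≠ 0 := by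
    simpa using (Real.sqrt_pos.mpr hr).ne'
  simp only [ContinuousLinearMap.smul_apply, ContinuousLinearMap.coe_sum',
    Finset.sum_apply, ContinuousLinearMap.add_apply, hL, ContinuousLinearMap.coe_comp',
    Function.comp_apply, ContinuousLinearMap.proj_apply, Complex.ofRealCLM_apply,
    Pi.single_apply, hpow]
  simp only [apply_ite (fun r : ℝ => (r : ℂ)), Complex.ofReal_one, Complex.ofReal_zero,
    mul_ite, mul_one, mul_zero, ite_add_ite, add_zero, smul_eq_mul]
  rw [Finset.sum_ite_eq' Finset.univ j
    (fun k => Complex.I * (p k : ℝ) + Complex.I * (p k : ℝ))]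
  simp only [Finset.mem_univ, if_true]
  field_simp
  ring_nf
  simp [Complex.I_sq]


/-- Along a zero-energy trajectory `γ` of `γ' = -∇φ(γ)/V(γ)` one has
`∇_x a₊(γ(t),0) = 0` and `∇_ξ a₊(γ(t),0) = γ'(t)` (a real vector), i.e. `t ↦ (γ(t),0)`
is an integral curve of the Hamiltonian vector field of `a₊`, which is real along it. -/
theorem stmt15 (d : ℕ) (hd : 1 ≤ d) (δ : ℝ) (hδ0 : 0 < δ) (hδ1 : δ < 1)
    (V φ : (Fin d → ℝ) → ℝ) (hV : ContDiff ℝ (⊤ : ℕ∞) V) (hφ : ContDiff ℝ (⊤ : ℕ∞) φ)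
    (hVbd : ∀ x, -1 + δ ≤ V x ∧ V x ≤ -δ)
    (hφ1 : ∀ x, Real.sqrt (∑ j : Fin d, (gradPhi d φ x j) ^ 2) < 1)
    (hle : ∀ x, -(Real.sqrt (1 - ∑ j : Fin d, (gradPhi d φ x j) ^ 2)) - V x ≤ 0)
    (I : Set ℝ) (hI : I.OrdConnected) (γ : ℝ → Fin d → ℝ)
    (hγ0 : ∀ t ∈ I, -(Real.sqrt (1 - ∑ j : Fin d, (gradPhi d φ (γ t) j) ^ 2)) - V (γ t) = 0)
    (hγ' : ∀ t ∈ I,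
      HasDerivAt γ (fun j => -(gradPhi d φ (γ t) j) / V (γ t)) t) :
    ∀ t ∈ I,
      (∀ j : Fin d, gradXAPlus d V φ (γ t) 0 j = 0) ∧
      (∀ j : Fin d, gradXiAPlus d V φ (γ t) 0 j =
        ((-(gradPhi d φ (γ t) j) / V (γ t) : ℝ) : ℂ)) := by
  have hlt : ∀ x, ∑ j : Fin d, (gradPhi d φ x j) ^ 2 < 1 := by
    intro x
    have hS0 : (0:ℝ) ≤ ∑ j : Fin d, (gradPhi d φ x j) ^ 2 := by positivity
    nlinarith [Real.sq_sqrt hS0, Real.sqrt_nonneg (∑ j : Fin d, (gradPhi d φ x j) ^ 2),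
      hφ1 x]
  intro t ht
  have hVneg : V (γ t) < 0 := lt_of_le_of_lt (hVbd (γ t)).2 (by linarith)
  have hsqrt : Real.sqrt (1 - ∑ j : Fin d, (gradPhi d φ (γ t) j) ^ 2) = -(V (γ t)) := by
    have := hγ0 t ht; linarith
  constructor
  · intro j
    show fderiv ℝ (fun x' => aPlus d V φ x' 0) (γ t) (Pi.single j 1) = 0
    rw [gradX_zero d V φ hV hφ hlt hle (γ t) (hγ0 t ht)]
    rfl
  · intro j
    show fderiv ℝ (fun ξ' => aPlus d V φ (γ t) ξ') 0 (Pi.single j 1) = _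
    rw [gradXi_val d V φ (γ t) (hlt (γ t)) j, hsqrt]
    push_cast
    rw [div_neg, neg_div]
end

section
/- Fix integers d ≥ 1 and d* ≥ 1 and Hermitian d*×d* complex matrices α₀, α₁, …, α_d satisfying the Clifford relations α_k α_ℓ + α_ℓ α_k = 2 δ_{kℓ} 𝟙. Let τ > 0 and let w : [0,τ] → ℝ^d be continuous. Suppose U, Ũ : [0,τ] → (d*×d* complex matrices) are differentiable with U(0) = Ũ(0) = 𝟙 and, for every t ∈ [0,τ], U'(t) = i (∑_{j=1}^d w_j(t) α_j) U(t) and Ũ'(t) = i (∑_{j=1}^d w_j(τ−t) α_j) Ũ(t). Then U(τ)* α₀ = α₀ Ũ(τ), where * denotes the conjugate transpose. -/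
attribute [local instance] Matrix.normedAddCommGroup Matrix.normedSpace

/-!
Put `G(t) = U(τ - t)ᴴ α₀ Ũ(t)`. With `A = ∑ wⱼ αⱼ` Hermitian, `t ↦ U(τ - t)` and `Ũ` are driven
by the same generator `i A(τ - t)`, and `α₀` anticommutes with `A`, so the product rule gives
`G'(t) = i U(τ - t)ᴴ (A α₀ + α₀ A) Ũ(t) = 0`. Hence `G(0) = U(τ)ᴴ α₀` equals `G(τ) = α₀ Ũ(τ)`.
-/

open Set Matrix

theorem eq_of_hasDerivWithinAt_Icc_eq_zero {E : Type*} [NormedAddCommGroup E] [NormedSpace ℝ E]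
    {f : ℝ → E} {a b : ℝ} (hab : a ≤ b)
    (hf : ∀ x ∈ Icc a b, HasDerivWithinAt f 0 (Icc a b) x) : f b = f a := by
  refine constant_of_has_deriv_right_zero (fun x hx => (hf x hx).continuousWithinAt)
    (fun x hx => ?_) b (right_mem_Icc.2 hab)
  exact (hf x (Ico_subset_Icc_self hx)).mono_of_mem_nhdsWithin (Icc_mem_nhdsGE_of_mem hx)

section MatrixCalculus

variable {n : Type*} [Fintype n]

noncomputable def Matrix.mulCLM [DecidableEq n] :
    Matrix n n ℂ →L[ℝ] Matrix n n ℂ →L[ℝ] Matrix n n ℂ :=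
  LinearMap.toContinuousLinearMap
    (LinearMap.toContinuousLinearMap.toLinearMap ∘ₗ LinearMap.mul ℝ (Matrix n n ℂ))

theorem HasDerivWithinAt.matrix_mul [DecidableEq n] {f g : ℝ → Matrix n n ℂ}
    {f' g' : Matrix n n ℂ} {s : Set ℝ} {x : ℝ} (hf : HasDerivWithinAt f f' s x)
    (hg : HasDerivWithinAt g g' s x) :
    HasDerivWithinAt (fun t => f t * g t) (f x * g' + f' * g x) s x :=
  Matrix.mulCLM.hasDerivWithinAt_of_bilinear hf hg

theorem HasDerivWithinAt.conjTranspose_comp_const_sub {U : ℝ → Matrix n n ℂ}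
    {U' : Matrix n n ℂ} {s t : Set ℝ} {c x : ℝ} (hU : HasDerivWithinAt U U' s (c - x))
    (hst : MapsTo (c - ·) t s) :
    HasDerivWithinAt (fun y => (U (c - y))ᴴ) (-U'ᴴ) t x := by
  have h := hU.scomp x ((hasDerivWithinAt_id x t).const_sub c) hst
  have h' := h.star
  simp only [Function.comp_def, star_eq_conjTranspose, star_neg, neg_smul, one_smul] at h'
  exact h'

theorem conjTranspose_mul_mul_eq_of_anticomm [DecidableEq n] {P : Matrix n n ℂ}
    {A U V : ℝ → Matrix n n ℂ} {τ : ℝ} (hτ : 0 ≤ τ) (hA : ∀ t, (A t).IsHermitian)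
    (hPA : ∀ t, P * A t + A t * P = 0)
    (hU : ∀ t ∈ Icc 0 τ, HasDerivWithinAt U (Complex.I • (A t * U t)) (Icc 0 τ) t)
    (hV : ∀ t ∈ Icc 0 τ, HasDerivWithinAt V (Complex.I • (A (τ - t) * V t)) (Icc 0 τ) t) :
    (U τ)ᴴ * P * V 0 = (U 0)ᴴ * P * V τ := by
  have hmaps : MapsTo (τ - ·) (Icc 0 τ) (Icc 0 τ) := fun s hs =>
    ⟨by linarith [hs.2], by linarith [hs.1]⟩
  have hG : ∀ t ∈ Icc 0 τ,
      HasDerivWithinAt (fun t => (U (τ - t))ᴴ * P * V t) 0 (Icc 0 τ) t := by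
    intro t ht
    have hUr := (hU _ (hmaps ht)).conjTranspose_comp_const_sub (c := τ) hmaps
    have h := (hUr.matrix_mul (hasDerivWithinAt_const t _ P)).matrix_mul (hV t ht)
    convert h using 1
    set W := U (τ - t)
    have hW : -(Complex.I • (A (τ - t) * W))ᴴ = Complex.I • (Wᴴ * A (τ - t)) := by
      simp [conjTranspose_smul, conjTranspose_mul, (hA _).eq]
    rw [hW, mul_zero, zero_add, Matrix.mul_smul, Matrix.smul_mul, Matrix.smul_mul, ← smul_add]
    calc (0 : Matrix n n ℂ) = Complex.I • (Wᴴ * (P * A (τ - t) + A (τ - t) * P) * V t) := by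
          rw [hPA, mul_zero, zero_mul, smul_zero]
      _ = _ := by congr 1; noncomm_ring
  simpa using (eq_of_hasDerivWithinAt_Icc_eq_zero hτ hG).symm

end MatrixCalculus

theorem stmt19_general (d dstar : ℕ)
    (α : Fin (d + 1) → Matrix (Fin dstar) (Fin dstar) ℂ)
    (hHerm : ∀ k, (α k).IsHermitian)
    (hCliff : ∀ k l, α k * α l + α l * α k =
      if k = l then (2 : ℂ) • (1 : Matrix (Fin dstar) (Fin dstar) ℂ) else 0)
    (τ : ℝ) (hτ : 0 < τ)
    (w : ℝ → Fin d → ℝ)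
    (U Utld : ℝ → Matrix (Fin dstar) (Fin dstar) ℂ)
    (hU0 : U 0 = 1) (hUtld0 : Utld 0 = 1)
    (hU : ∀ t ∈ Set.Icc (0 : ℝ) τ,
      HasDerivWithinAt U
        (Complex.I • ((∑ j : Fin d, (w t j : ℂ) • α j.succ) * U t))
        (Set.Icc (0 : ℝ) τ) t)
    (hUtld : ∀ t ∈ Set.Icc (0 : ℝ) τ,
      HasDerivWithinAt Utld
        (Complex.I • ((∑ j : Fin d, (w (τ - t) j : ℂ) • α j.succ) * Utld t))
        (Set.Icc (0 : ℝ) τ) t) :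
    (U τ).conjTranspose * α 0 = α 0 * Utld τ := by
  set A : ℝ → Matrix (Fin dstar) (Fin dstar) ℂ := fun s => ∑ j : Fin d, (w s j : ℂ) • α j.succ
  have hA : ∀ s, (A s).IsHermitian := fun s =>
    isSelfAdjoint_sum _ fun j _ => IsSelfAdjoint.smul (Complex.conj_ofReal _) (hHerm j.succ)
  have hanti : ∀ s, α 0 * A s + A s * α 0 = 0 := by
    intro s
    simp only [A, Finset.mul_sum, Finset.sum_mul, ← Finset.sum_add_distrib]
    refine Finset.sum_eq_zero fun j _ => ?_
    rw [Matrix.mul_smul, Matrix.smul_mul, ← smul_add, hCliff, if_neg (Fin.succ_ne_zero j).symm,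
      smul_zero]
  simpa [hU0, hUtld0] using conjTranspose_mul_mul_eq_of_anticomm hτ.le hA hanti hU hUtld

/-- Time-reversal identity for the spin-transport matrices: if `U' = i (α·w(t)) U` and
`Ũ' = i (α·w(τ-t)) Ũ` on `[0,τ]` with `U(0) = Ũ(0) = 𝟙`, then `U(τ)* α₀ = α₀ Ũ(τ)`. -/
theorem stmt19 (d dstar : ℕ) (hd : 1 ≤ d) (hdstar : 1 ≤ dstar)
    (α : Fin (d + 1) → Matrix (Fin dstar) (Fin dstar) ℂ)
    (hHerm : ∀ k, (α k).IsHermitian)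
    (hCliff : ∀ k l, α k * α l + α l * α k =
      if k = l then (2 : ℂ) • (1 : Matrix (Fin dstar) (Fin dstar) ℂ) else 0)
    (τ : ℝ) (hτ : 0 < τ)
    (w : ℝ → Fin d → ℝ) (hw : ContinuousOn w (Set.Icc 0 τ))
    (U Utld : ℝ → Matrix (Fin dstar) (Fin dstar) ℂ)
    (hU0 : U 0 = 1) (hUtld0 : Utld 0 = 1)
    (hU : ∀ t ∈ Set.Icc (0 : ℝ) τ,
      HasDerivWithinAt U
        (Complex.I • ((∑ j : Fin d, (w t j : ℂ) • α j.succ) * U t))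
        (Set.Icc (0 : ℝ) τ) t)
    (hUtld : ∀ t ∈ Set.Icc (0 : ℝ) τ,
      HasDerivWithinAt Utld
        (Complex.I • ((∑ j : Fin d, (w (τ - t) j : ℂ) • α j.succ) * Utld t))
        (Set.Icc (0 : ℝ) τ) t) :
    (U τ).conjTranspose * α 0 = α 0 * Utld τ :=
  stmt19_general d dstar α hHerm hCliff τ hτ w U Utld hU0 hUtld0 hU hUtld
end
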